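/- If the weights of a deep linear network evolve under the batch predictive coding gradient flow dW_l/dt = (1/B) W_{L:l+1}ᵀ S⁻¹ R X*_{l−1}ᵀ, where X*_{l−1}(t) ∈ ℝ^{n_{l−1} × B} are any given matrices, then the matrix of predictions Ŷ(t) = W_{L:1}(t) X satisfies dŶ/dt = (1/B) ∑_{l=1}^{L} W_{L:l+1} W_{L:l+1}ᵀ S⁻¹ R X*_{l−1}ᵀ X̂_{l−1}. -/

import Mathlib

/-!
Along the chain `W_{L:1} = W_{L:k+1} W_{k:1}`, the product rule gives by induction on `k`
`W_{L:k+1} (d/dt) W_{k:1} = ∑_{l ≤ k} W_{L:l+1} W_l' W_{l-1:1}`, which for `k = L` is the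
derivative of the end-to-end matrix. Substituting the predictive-coding flow for `W_l'` and
multiplying by the fixed input batch `X` gives the formula for `dŶ/dt`.
-/

open Matrix

def HasEntrywiseDerivAt {m p : Type*} (A : ℝ → Matrix m p ℝ) (A' : Matrix m p ℝ) (t : ℝ) :
    Prop :=
  ∀ i j, HasDerivAt (fun s => A s i j) (A' i j) t

namespace HasEntrywiseDerivAt

variable {m p q : Type*} {t : ℝ}

theorem const (C : Matrix m p ℝ) : HasEntrywiseDerivAt (fun _ => C) 0 t :=
  fun i j => hasDerivAt_const t (C i j)

theorem mul [Fintype p] {A : ℝ → Matrix m p ℝ} {C : ℝ → Matrix p q ℝ}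
    {A' : Matrix m p ℝ} {C' : Matrix p q ℝ}
    (hA : HasEntrywiseDerivAt A A' t) (hC : HasEntrywiseDerivAt C C' t) :
    HasEntrywiseDerivAt (fun s => A s * C s) (A' * C t + A t * C') t := by
  intro i j
  simp only [Matrix.mul_apply, Matrix.add_apply, ← Finset.sum_add_distrib]
  exact HasDerivAt.fun_sum fun k _ => (hA i k).fun_mul (hC k j)

theorem mul_const [Fintype p] {A : ℝ → Matrix m p ℝ} {A' : Matrix m p ℝ}
    (hA : HasEntrywiseDerivAt A A' t) (C : Matrix p q ℝ) :
    HasEntrywiseDerivAt (fun s => A s * C) (A' * C) t := by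
  simpa only [Matrix.mul_zero, add_zero] using hA.mul (const C)

end HasEntrywiseDerivAt

section DeepLinearNetwork

-- `P k t = W_{L:k+1}(t)` is the head of the chain of layers and `Q k t = W_{k:1}(t)` its tail.
variable {L : ℕ} {n : ℕ → ℕ} {W : ∀ k : ℕ, ℝ → Matrix (Fin (n k)) (Fin (n (k - 1))) ℝ}
  {P : ∀ k : ℕ, ℝ → Matrix (Fin (n L)) (Fin (n k)) ℝ}
  {Q : ∀ k : ℕ, ℝ → Matrix (Fin (n k)) (Fin (n 0)) ℝ}

theorem head_mul_tail_eq_endToEnd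
    (hP : ∀ t : ℝ, ∀ k : ℕ, k < L → P k t = P (k + 1) t * W (k + 1) t)
    (hQ0 : ∀ t : ℝ, Q 0 t = 1)
    (hQ : ∀ t : ℝ, ∀ k : ℕ, 1 ≤ k → k ≤ L → Q k t = W k t * Q (k - 1) t) (t : ℝ) :
    ∀ k ≤ L, P k t * Q k t = P 0 t := by
  intro k
  induction k with
  | zero => intro _; rw [hQ0, Matrix.mul_one]
  | succ k ih =>
    intro hk
    rw [hQ t (k + 1) (Nat.le_add_left 1 k) hk, ← Matrix.mul_assoc, ← hP t k hk]
    exact ih (Nat.le_of_succ_le hk)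

theorem exists_hasEntrywiseDerivAt_tail
    (hP : ∀ t : ℝ, ∀ k : ℕ, k < L → P k t = P (k + 1) t * W (k + 1) t)
    (hQ0 : ∀ t : ℝ, Q 0 t = 1)
    (hQ : ∀ t : ℝ, ∀ k : ℕ, 1 ≤ k → k ≤ L → Q k t = W k t * Q (k - 1) t)
    {W' : ∀ k : ℕ, Matrix (Fin (n k)) (Fin (n (k - 1))) ℝ} {t₀ : ℝ}
    (hW : ∀ l : ℕ, 1 ≤ l → l ≤ L → HasEntrywiseDerivAt (W l) (W' l) t₀) :
    ∀ k ≤ L, ∃ D, HasEntrywiseDerivAt (Q k) D t₀ ∧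
      P k t₀ * D = ∑ l ∈ Finset.Icc 1 k, P l t₀ * W' l * Q (l - 1) t₀ := by
  intro k
  induction k with
  | zero =>
    intro _
    refine ⟨0, ?_, by simp⟩
    rw [show Q 0 = fun _ => 1 from funext hQ0]
    exact HasEntrywiseDerivAt.const 1
  | succ k ih =>
    intro hk
    obtain ⟨D, hD, hPD⟩ := ih (Nat.le_of_succ_le hk)
    have hQk : Q (k + 1) = fun t => W (k + 1) t * Q (k + 1 - 1) t :=
      funext fun t => hQ t (k + 1) (Nat.le_add_left 1 k) hk
    -- `k + 1 - 1` is `k` only up to definitional unfolding, which instance search does not do.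
    refine ⟨W' (k + 1) * Q (k + 1 - 1) t₀ +
      W (k + 1) t₀ * show Matrix (Fin (n (k + 1 - 1))) (Fin (n 0)) ℝ from D, ?_, ?_⟩
    · rw [hQk]
      exact (hW _ (Nat.le_add_left 1 k) hk).mul hD
    · rw [Finset.sum_Icc_succ_top (Nat.le_add_left 1 k), ← hPD, hP t₀ k (Nat.lt_of_succ_le hk),
        Matrix.mul_add, add_comm, Matrix.mul_assoc, Matrix.mul_assoc]

theorem hasEntrywiseDerivAt_endToEnd (hPL : ∀ t : ℝ, P L t = 1)
    (hP : ∀ t : ℝ, ∀ k : ℕ, k < L → P k t = P (k + 1) t * W (k + 1) t)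
    (hQ0 : ∀ t : ℝ, Q 0 t = 1)
    (hQ : ∀ t : ℝ, ∀ k : ℕ, 1 ≤ k → k ≤ L → Q k t = W k t * Q (k - 1) t)
    {W' : ∀ k : ℕ, Matrix (Fin (n k)) (Fin (n (k - 1))) ℝ} {t₀ : ℝ}
    (hW : ∀ l : ℕ, 1 ≤ l → l ≤ L → HasEntrywiseDerivAt (W l) (W' l) t₀) :
    HasEntrywiseDerivAt (P 0) (∑ l ∈ Finset.Icc 1 L, P l t₀ * W' l * Q (l - 1) t₀) t₀ := by
  obtain ⟨D, hD, hPD⟩ := exists_hasEntrywiseDerivAt_tail hP hQ0 hQ hW L le_rfl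
  have hP0 : P 0 = Q L := funext fun t => by
    rw [← head_mul_tail_eq_endToEnd hP hQ0 hQ t L le_rfl, hPL, Matrix.one_mul]
  rwa [← hPD, hPL, Matrix.one_mul, hP0]

end DeepLinearNetwork

theorem stmt11_general
    (L : ℕ) (n : ℕ → ℕ) (B : ℕ)
    (W : ∀ k : ℕ, ℝ → Matrix (Fin (n k)) (Fin (n (k - 1))) ℝ)
    (P : ∀ k : ℕ, ℝ → Matrix (Fin (n L)) (Fin (n k)) ℝ)
    (hPL : ∀ t : ℝ, P L t = 1)
    (hP : ∀ t : ℝ, ∀ k : ℕ, k < L → P k t = P (k + 1) t * W (k + 1) t)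
    (Q : ∀ k : ℕ, ℝ → Matrix (Fin (n k)) (Fin (n 0)) ℝ)
    (hQ0 : ∀ t : ℝ, Q 0 t = 1)
    (hQ : ∀ t : ℝ, ∀ k : ℕ, 1 ≤ k → k ≤ L → Q k t = W k t * Q (k - 1) t)
    (X : Matrix (Fin (n 0)) (Fin B) ℝ) (Y : Matrix (Fin (n L)) (Fin B) ℝ) (t₀ : ℝ)
    (Xs : ∀ k : ℕ, Matrix (Fin (n k)) (Fin B) ℝ)
    (hW : ∀ l : ℕ, 1 ≤ l → l ≤ L → ∀ i j, HasDerivAt (fun t => W l t i j)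
      (((1 / (B : ℝ)) • ((P l t₀)ᵀ * (∑ k ∈ Finset.Icc 1 L, P k t₀ * (P k t₀)ᵀ)⁻¹ *
        (Y - P 0 t₀ * X) * (Xs (l - 1))ᵀ)) i j) t₀) :
    ∀ i b, HasDerivAt (fun t => (P 0 t * X) i b)
      (((1 / (B : ℝ)) • ∑ l ∈ Finset.Icc 1 L,
        P l t₀ * (P l t₀)ᵀ * (∑ k ∈ Finset.Icc 1 L, P k t₀ * (P k t₀)ᵀ)⁻¹ *
          (Y - P 0 t₀ * X) * (Xs (l - 1))ᵀ * (Q (l - 1) t₀ * X)) i b) t₀ := by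
  set S := ∑ k ∈ Finset.Icc 1 L, P k t₀ * (P k t₀)ᵀ
  set R := Y - P 0 t₀ * X
  have hŶ := (hasEntrywiseDerivAt_endToEnd hPL hP hQ0 hQ
    (W' := fun l => (1 / (B : ℝ)) • ((P l t₀)ᵀ * S⁻¹ * R * (Xs (l - 1))ᵀ)) hW).mul_const X
  have hflow : (∑ l ∈ Finset.Icc 1 L,
      P l t₀ * ((1 / (B : ℝ)) • ((P l t₀)ᵀ * S⁻¹ * R * (Xs (l - 1))ᵀ)) * Q (l - 1) t₀) * X =
      (1 / (B : ℝ)) • ∑ l ∈ Finset.Icc 1 L,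
        P l t₀ * (P l t₀)ᵀ * S⁻¹ * R * (Xs (l - 1))ᵀ * (Q (l - 1) t₀ * X) := by
    simp only [Matrix.sum_mul, Finset.smul_sum, Matrix.mul_smul, Matrix.smul_mul, Matrix.mul_assoc]
  rwa [hflow] at hŶ

/-- If the weights of a deep linear network evolve under the batch
predictive coding gradient flow `dW_l/dt = (1/B) W_{L:l+1}ᵀ S⁻¹ R X*_{l−1}ᵀ`, where
`X*_{l−1}` are any given matrices, then the matrix of predictions
`Ŷ(t) = W_{L:1}(t) X` satisfies
`dŶ/dt = (1/B) ∑_{l=1}^L W_{L:l+1} W_{L:l+1}ᵀ S⁻¹ R X*_{l−1}ᵀ X̂_{l−1}`.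
Here `P l t = W_{L:l+1}(t)`, `Q l t = W_{l:1}(t)`, `R = Y − W_{L:1} X`,
`X̂_{l−1} = W_{l−1:1} X`, and `S = ∑_{k=1}^L W_{L:k+1} W_{L:k+1}ᵀ` (invertible);
derivatives of matrix-valued functions are stated entrywise. -/
theorem stmt11
    (L : ℕ) (hL : 1 ≤ L) (n : ℕ → ℕ) (B : ℕ) (hB : 0 < B)
    (W : ∀ k : ℕ, ℝ → Matrix (Fin (n k)) (Fin (n (k - 1))) ℝ)
    (P : ∀ k : ℕ, ℝ → Matrix (Fin (n L)) (Fin (n k)) ℝ)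
    (hPL : ∀ t : ℝ, P L t = 1)
    (hP : ∀ t : ℝ, ∀ k : ℕ, k < L → P k t = P (k + 1) t * W (k + 1) t)
    (Q : ∀ k : ℕ, ℝ → Matrix (Fin (n k)) (Fin (n 0)) ℝ)
    (hQ0 : ∀ t : ℝ, Q 0 t = 1)
    (hQ : ∀ t : ℝ, ∀ k : ℕ, 1 ≤ k → k ≤ L → Q k t = W k t * Q (k - 1) t)
    (X : Matrix (Fin (n 0)) (Fin B) ℝ) (Y : Matrix (Fin (n L)) (Fin B) ℝ) (t₀ : ℝ)
    (Xs : ∀ k : ℕ, Matrix (Fin (n k)) (Fin B) ℝ)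
    (hS : IsUnit (∑ k ∈ Finset.Icc 1 L, P k t₀ * (P k t₀)ᵀ).det)
    (hW : ∀ l : ℕ, 1 ≤ l → l ≤ L → ∀ i j, HasDerivAt (fun t => W l t i j)
      (((1 / (B : ℝ)) • ((P l t₀)ᵀ * (∑ k ∈ Finset.Icc 1 L, P k t₀ * (P k t₀)ᵀ)⁻¹ *
        (Y - P 0 t₀ * X) * (Xs (l - 1))ᵀ)) i j) t₀) :
    ∀ i b, HasDerivAt (fun t => (P 0 t * X) i b)
      (((1 / (B : ℝ)) • ∑ l ∈ Finset.Icc 1 L,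
        P l t₀ * (P l t₀)ᵀ * (∑ k ∈ Finset.Icc 1 L, P k t₀ * (P k t₀)ᵀ)⁻¹ *
          (Y - P 0 t₀ * X) * (Xs (l - 1))ᵀ * (Q (l - 1) t₀ * X)) i b) t₀ :=
  stmt11_general L n B W P hPL hP Q hQ0 hQ X Y t₀ Xs hW
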